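/- Let z = x + iy be a complex number with x ≠ 0 or y² ≤ 1, let ρ₁ = |z−i|, ρ₂ = |z+i|, a = (ρ₁+ρ₂)/2, b = (ρ₂−ρ₁)/2, and let T(z) = sign(x)·arcosh(a) + i·arcsin(b). Then sinh(T(z)) = z, where sinh is the complex hyperbolic sine function. -/

import Mathlib

/-!
With `u = sign x · arcosh a` and `v = arcsin b`, `sinh (u + iv) = sinh u cos v + i cosh u sin v`,
where `sinh u = sign x · √(a² - 1)`, `cos v = √(1 - b²)` and `sin v = b`. The elliptic coordinates
satisfy `a b = y` and `(a² - 1)(1 - b²) = x²`, so the real part is `sign x · |x| = x` for every `z`.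
For `x ≠ 0` the imaginary part is `cosh u · b = a b = y`; on the imaginary axis `u = 0`, and the
condition `y² ≤ 1` forces `a = 1`, so again `cosh u · b = a b = y`.
-/

open Complex

/-- Real inverse hyperbolic cosine, `arcosh t = ln (t + √(t²-1))`. -/
noncomputable def arcosh (t : ℝ) : ℝ := Real.log (t + Real.sqrt (t ^ 2 - 1))

/-- `a(w) = (|w-i| + |w+i|)/2`. -/
noncomputable def aF (w : ℂ) : ℝ :=
  (‖w - Complex.I‖ + ‖w + Complex.I‖) / 2

/-- `b(w) = (|w+i| - |w-i|)/2`. -/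
noncomputable def bF (w : ℂ) : ℝ :=
  (‖w + Complex.I‖ - ‖w - Complex.I‖) / 2

/-- Principal branch `T(w)` of the inverse hyperbolic sine on the cut plane
`ℂ ∖ ((-i∞,-i) ∪ (i,i∞))`. -/
noncomputable def T (w : ℂ) : ℂ :=
  (Real.sign w.re * arcosh (aF w) : ℝ) + Complex.I * (Real.arcsin (bF w) : ℝ)

theorem Real.sign_mul_abs (x : ℝ) : Real.sign x * |x| = x := by
  rcases lt_trichotomy x 0 with hx | rfl | hx
  · rw [Real.sign_of_neg hx, abs_of_neg hx]; ring
  · simp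
  · rw [Real.sign_of_pos hx, abs_of_pos hx, one_mul]

section Arcosh

variable {t : ℝ}

lemma add_sqrt_sq_sub_one_pos (ht : 1 ≤ t) : 0 < t + √(t ^ 2 - 1) := by
  positivity

lemma inv_add_sqrt_sq_sub_one (ht : 1 ≤ t) : (t + √(t ^ 2 - 1))⁻¹ = t - √(t ^ 2 - 1) := by
  refine inv_eq_of_mul_eq_one_right ?_
  have hs : √(t ^ 2 - 1) ^ 2 = t ^ 2 - 1 := Real.sq_sqrt (by nlinarith)
  linear_combination -hs

lemma cosh_arcosh (ht : 1 ≤ t) : Real.cosh (arcosh t) = t := by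
  rw [arcosh, Real.cosh_eq, Real.exp_neg, Real.exp_log (add_sqrt_sq_sub_one_pos ht),
    inv_add_sqrt_sq_sub_one ht]
  ring

lemma sinh_arcosh (ht : 1 ≤ t) : Real.sinh (arcosh t) = √(t ^ 2 - 1) := by
  rw [arcosh, Real.sinh_eq, Real.exp_neg, Real.exp_log (add_sqrt_sq_sub_one_pos ht),
    inv_add_sqrt_sq_sub_one ht]
  ring

lemma cosh_sign_mul_arcosh {x : ℝ} (hx : x ≠ 0) (ht : 1 ≤ t) :
    Real.cosh (Real.sign x * arcosh t) = t := by
  rcases Real.sign_apply_eq_of_ne_zero x hx with h | h <;>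
    simp [h, Real.cosh_neg, cosh_arcosh ht]

lemma sinh_sign_mul_arcosh (x : ℝ) (ht : 1 ≤ t) :
    Real.sinh (Real.sign x * arcosh t) = Real.sign x * √(t ^ 2 - 1) := by
  rcases Real.sign_apply_eq x with h | h | h <;>
    simp [h, Real.sinh_neg, sinh_arcosh ht]

end Arcosh

section EllipticCoordinates

variable (z : ℂ)

lemma sq_norm_sub_I : ‖z - I‖ ^ 2 = z.re ^ 2 + (z.im - 1) ^ 2 := by
  rw [Complex.sq_norm, Complex.normSq_apply]
  simp only [sub_re, sub_im, I_re, I_im]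
  ring

lemma sq_norm_add_I : ‖z + I‖ ^ 2 = z.re ^ 2 + (z.im + 1) ^ 2 := by
  rw [Complex.sq_norm, Complex.normSq_apply]
  simp only [add_re, add_im, I_re, I_im]
  ring

lemma one_le_aF : 1 ≤ aF z := by
  have h := norm_sub_le (z + I) (z - I)
  rw [show z + I - (z - I) = 2 * I by ring] at h
  simp only [norm_mul, Complex.norm_two, Complex.norm_I, mul_one] at h
  unfold aF
  linarith

lemma abs_bF_le_one : |bF z| ≤ 1 := by
  have h := abs_norm_sub_norm_le (z + I) (z - I)
  rw [show z + I - (z - I) = 2 * I by ring] at h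
  simp only [norm_mul, Complex.norm_two, Complex.norm_I, mul_one] at h
  unfold bF
  rw [abs_div, abs_two]
  linarith

lemma aF_mul_bF : aF z * bF z = z.im := by
  unfold aF bF
  linear_combination (sq_norm_add_I z - sq_norm_sub_I z) / 4

lemma aF_sq_sub_one_mul_one_sub_bF_sq : (aF z ^ 2 - 1) * (1 - bF z ^ 2) = z.re ^ 2 := by
  have hsum : aF z ^ 2 + bF z ^ 2 = z.re ^ 2 + z.im ^ 2 + 1 := by
    unfold aF bF
    linear_combination (sq_norm_add_I z + sq_norm_sub_I z) / 2
  linear_combination hsum - congrArg (· ^ 2) (aF_mul_bF z)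

variable {z}

lemma aF_eq_one_of_re_eq_zero (hx : z.re = 0) (hy : z.im ^ 2 ≤ 1) : aF z = 1 := by
  have ha := one_le_aF z
  have hprod : (aF z ^ 2 - 1) * (1 - bF z ^ 2) = 0 := by
    rw [aF_sq_sub_one_mul_one_sub_bF_sq, hx]; ring
  rcases mul_eq_zero.1 hprod with h | h
  · nlinarith
  · have him : z.im ^ 2 = aF z ^ 2 := by
      rw [← aF_mul_bF]; linear_combination (-aF z ^ 2) * h
    nlinarith

end EllipticCoordinates

lemma sinh_ofReal_add_I_mul_ofReal (u v : ℝ) :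
    Complex.sinh (u + I * v) = ⟨Real.sinh u * Real.cos v, Real.cosh u * Real.sin v⟩ := by
  rw [mk_eq_add_mul_I, Complex.sinh_add, mul_comm I, Complex.sinh_mul_I, Complex.cosh_mul_I]
  push_cast
  ring

lemma sinh_T_re (z : ℂ) : (Complex.sinh (T z)).re = z.re := by
  rw [T, sinh_ofReal_add_I_mul_ofReal, sinh_sign_mul_arcosh _ (one_le_aF z), Real.cos_arcsin,
    mul_assoc, ← Real.sqrt_mul (by nlinarith [one_le_aF z]), aF_sq_sub_one_mul_one_sub_bF_sq,
    Real.sqrt_sq_eq_abs, Real.sign_mul_abs]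

lemma sinh_T_im (z : ℂ) :
    (Complex.sinh (T z)).im = Real.cosh (Real.sign z.re * arcosh (aF z)) * bF z := by
  obtain ⟨hb₁, hb₂⟩ := abs_le.1 (abs_bF_le_one z)
  rw [T, sinh_ofReal_add_I_mul_ofReal, Real.sin_arcsin hb₁ hb₂]

lemma cosh_sign_mul_arcosh_aF {z : ℂ} (h : z.re ≠ 0 ∨ z.im ^ 2 ≤ 1) :
    Real.cosh (Real.sign z.re * arcosh (aF z)) = aF z := by
  rcases eq_or_ne z.re 0 with hx | hx
  · rw [hx, Real.sign_zero, zero_mul, Real.cosh_zero,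
      aF_eq_one_of_re_eq_zero hx (h.resolve_left (not_not.2 hx))]
  · exact cosh_sign_mul_arcosh hx (one_le_aF z)

theorem stmt14 (z : ℂ) (h : z.re ≠ 0 ∨ z.im ^ 2 ≤ 1) : Complex.sinh (T z) = z := by
  apply Complex.ext (sinh_T_re z)
  rw [sinh_T_im, cosh_sign_mul_arcosh_aF h, aF_mul_bF]
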